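/- arXiv:0907.2194 — 7 statements merged into one kernel-verified Lean document; each statement's English description precedes it below -/
import Mathlib

section
/- Let ψ^R_{A,B} : A ⊗ E B ⟶ E(A ⊗ B) be defined as ψ^R_{A,B} := E(c_{B,A}) ∘ ψ^L_{B,A} ∘ c_{A,EB}. Then the equation (ψ^R a) holds: for all objects A, B, C of C, E(a_{A,B,C}) ∘ ψ^R_{A⊗B,C} = ψ^R_{A,B⊗C} ∘ (1_A ⊗ ψ^R_{B,C}) ∘ a_{A,B,EC}. -/
/-!
Unfolding `ψR`, the left side is `ψL_{C,A⊗B}` conjugated by braidings, and the right side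
applies `ψL` twice, to `B` and then to `A`. Rewriting `A ⊗ B` as `B ⊗ A` inside `ψL` (this is
where symmetry enters), the associativity of `ψL` merges the two applications on the right into
one, and naturality of `ψL` and of the braiding moves the remaining braidings to the outside,
where the two sides agree by the hexagon and Yang–Baxter identities.
-/

open CategoryTheory MonoidalCategory

section Strength

variable {C : Type*} [Category C] [MonoidalCategory C] (E : C ⥤ C)
  (ψL : ∀ A B : C, E.obj A ⊗ B ⟶ E.obj (A ⊗ B))

lemma psiL_whiskerLeft
    (ψL_nat : ∀ {A A' B B' : C} (f : A ⟶ A') (g : B ⟶ B'),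
      (E.map f ⊗ₘ g) ≫ ψL A' B' = ψL A B ≫ E.map (f ⊗ₘ g))
    (A : C) {B B' : C} (g : B ⟶ B') :
    E.obj A ◁ g ≫ ψL A B' = ψL A B ≫ E.map (A ◁ g) := by
  simpa using ψL_nat (𝟙 A) g

lemma psiL_whiskerRight
    (ψL_nat : ∀ {A A' B B' : C} (f : A ⟶ A') (g : B ⟶ B'),
      (E.map f ⊗ₘ g) ≫ ψL A' B' = ψL A B ≫ E.map (f ⊗ₘ g))
    {A A' : C} (f : A ⟶ A') (B : C) :
    E.map f ▷ B ≫ ψL A' B = ψL A B ≫ E.map (f ▷ B) := by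
  simpa using ψL_nat f (𝟙 B)

lemma psiL_eq_whiskerLeft_iso
    (ψL_nat : ∀ {A A' B B' : C} (f : A ⟶ A') (g : B ⟶ B'),
      (E.map f ⊗ₘ g) ≫ ψL A' B' = ψL A B ≫ E.map (f ⊗ₘ g))
    (A : C) {B B' : C} (g : B ≅ B') :
    ψL A B = E.obj A ◁ g.hom ≫ ψL A B' ≫ E.map (A ◁ g.inv) := by
  rw [← Category.assoc, psiL_whiskerLeft E ψL ψL_nat, Category.assoc, ← E.map_comp,
    ← whiskerLeft_comp, g.hom_inv_id, whiskerLeft_id, E.map_id, Category.comp_id]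

lemma psiL_whiskerRight_comp_psiL
    (ψLa : ∀ A B C' : C,
      (ψL A B ⊗ₘ 𝟙 C') ≫ ψL (A ⊗ B) C' ≫ E.map (α_ A B C').hom
        = (α_ (E.obj A) B C').hom ≫ ψL A (B ⊗ C'))
    (A B C' : C) :
    ψL A B ▷ C' ≫ ψL (A ⊗ B) C'
      = (α_ (E.obj A) B C').hom ≫ ψL A (B ⊗ C') ≫ E.map (α_ A B C').inv := by
  rw [← Category.assoc, ← ψLa, ← tensorHom_id]
  simp only [Category.assoc, ← E.map_comp, Iso.hom_inv_id, E.map_id, Category.comp_id]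

end Strength

section Braided

variable {C : Type*} [Category C] [MonoidalCategory C] [BraidedCategory C]

lemma braiding_tensor_left_comp_whiskerLeft_braiding (A B Y : C) :
    (β_ (A ⊗ B) Y).hom ≫ Y ◁ (β_ A B).hom
      = (α_ A B Y).hom ≫ A ◁ (β_ B Y).hom ≫ (β_ A (Y ⊗ B)).hom ≫ (α_ Y B A).hom := by
  simp

lemma whiskerLeft_braiding_comp_braiding_tensor_right (X A B : C) :
    X ◁ (β_ B A).hom ≫ (β_ X (A ⊗ B)).hom ≫ (α_ A B X).hom
      = (α_ X B A).inv ≫ (β_ X B).hom ▷ A ≫ (β_ (B ⊗ X) A).hom := by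
  simp only [BraidedCategory.braiding_tensor_right_hom, BraidedCategory.braiding_tensor_left_hom,
    Category.assoc, Iso.inv_hom_id, Category.comp_id]
  exact (BraidedCategory.yang_baxter X B A).symm

end Braided

theorem psiR_assoc_general {C : Type*} [Category C] [MonoidalCategory C] [SymmetricCategory C]
    (E : C ⥤ C)
    (ψL : ∀ A B : C, E.obj A ⊗ B ⟶ E.obj (A ⊗ B))
    (ψL_nat : ∀ {A A' B B' : C} (f : A ⟶ A') (g : B ⟶ B'),
      (E.map f ⊗ₘ g) ≫ ψL A' B' = ψL A B ≫ E.map (f ⊗ₘ g))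
    (ψLa : ∀ A B C' : C,
      (ψL A B ⊗ₘ 𝟙 C') ≫ ψL (A ⊗ B) C' ≫ E.map (α_ A B C').hom
        = (α_ (E.obj A) B C').hom ≫ ψL A (B ⊗ C'))
    (ψR : ∀ A B : C, A ⊗ E.obj B ⟶ E.obj (A ⊗ B))
    (hψR : ∀ A B : C,
      ψR A B = (β_ A (E.obj B)).hom ≫ ψL B A ≫ E.map (β_ B A).hom) :
    ∀ A B C' : C,
      ψR (A ⊗ B) C' ≫ E.map (α_ A B C').hom
        = (α_ A B (E.obj C')).hom ≫ (𝟙 A ⊗ₘ ψR B C') ≫ ψR A (B ⊗ C') := by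
  intro A B X
  simp only [hψR, id_tensorHom, whiskerLeft_comp, Category.assoc]
  rw [psiL_eq_whiskerLeft_iso E ψL ψL_nat X (β_ A B),
    ← SymmetricCategory.braiding_swap_eq_inv_braiding]
  slice_rhs 4 5 => rw [BraidedCategory.braiding_naturality_right]
  slice_rhs 3 4 => rw [BraidedCategory.braiding_naturality_right]
  slice_rhs 5 6 => rw [psiL_whiskerRight E ψL ψL_nat]
  slice_rhs 4 5 => rw [psiL_whiskerRight_comp_psiL E ψL ψLa]
  slice_lhs 1 2 => rw [braiding_tensor_left_comp_whiskerLeft_braiding]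
  simp only [Category.assoc, ← E.map_comp]
  rw [whiskerLeft_braiding_comp_braiding_tensor_right]

/-- For a left monoidal endofunctor `E` of a symmetric monoidal category `C`,
the family `ψ^R_{A,B} := E(c_{B,A}) ∘ ψ^L_{B,A} ∘ c_{A,EB}` satisfies the equation (ψ^R a):
`E(a_{A,B,C}) ∘ ψ^R_{A⊗B,C} = ψ^R_{A,B⊗C} ∘ (1_A ⊗ ψ^R_{B,C}) ∘ a_{A,B,EC}`. -/
theorem psiR_assoc {C : Type*} [Category C] [MonoidalCategory C] [SymmetricCategory C]
    (E : C ⥤ C)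
    (ψL : ∀ A B : C, E.obj A ⊗ B ⟶ E.obj (A ⊗ B))
    (ψL_nat : ∀ {A A' B B' : C} (f : A ⟶ A') (g : B ⟶ B'),
      (E.map f ⊗ₘ g) ≫ ψL A' B' = ψL A B ≫ E.map (f ⊗ₘ g))
    (ψLa : ∀ A B C' : C,
      (ψL A B ⊗ₘ 𝟙 C') ≫ ψL (A ⊗ B) C' ≫ E.map (α_ A B C').hom
        = (α_ (E.obj A) B C').hom ≫ ψL A (B ⊗ C'))
    (ψLr : ∀ A : C, ψL A (𝟙_ C) ≫ E.map (ρ_ A).hom = (ρ_ (E.obj A)).hom)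
    (ψR : ∀ A B : C, A ⊗ E.obj B ⟶ E.obj (A ⊗ B))
    (hψR : ∀ A B : C,
      ψR A B = (β_ A (E.obj B)).hom ≫ ψL B A ≫ E.map (β_ B A).hom) :
    ∀ A B C' : C,
      ψR (A ⊗ B) C' ≫ E.map (α_ A B C').hom
        = (α_ A B (E.obj C')).hom ≫ (𝟙 A ⊗ₘ ψR B C') ≫ ψR A (B ⊗ C') :=
  psiR_assoc_general E ψL ψL_nat ψLa ψR hψR
end

section
/- For each n ≥ 0 and objects A, B of C, define μ_n^{A,B} : E^n A ⨯ E^n B ⟶ E^n(A ⨯ B) recursively by μ_0^{A,B} := 1_{A⨯B} and μ_{n+1}^{A,B} := E(μ_n^{A,B}) ∘ ψ_{E^n A, E^n B}, where E^n denotes the n-fold iterate of E. Then the extensionality equation holds: for all n, A, B, μ_n^{A,B} ∘ ⟨E^n(π₁), E^n(π₂)⟩ = 1_{E^n(A⨯B)}, where ⟨E^n(π₁), E^n(π₂)⟩ : E^n(A⨯B) ⟶ E^n A ⨯ E^n B is the pairing of the images under E^n of the two product projections π₁ : A⨯B ⟶ A and π₂ : A⨯B ⟶ B. -/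
open CategoryTheory CategoryTheory.Limits

/-- The `n`-fold iterate `E^n` of an endofunctor `E`. -/
def functorIter {C : Type*} [Category C] (E : C ⥤ C) : ℕ → C ⥤ C
  | 0 => Functor.id C
  | n + 1 => functorIter E n ⋙ E

/-- The maps `μ_n : E^n A ⨯ E^n B ⟶ E^n (A ⨯ B)` defined recursively by
`μ_0 := 𝟙` and `μ_{n+1} := E(μ_n) ∘ ψ_{E^n A, E^n B}`. -/
noncomputable def muIter {C : Type*} [Category C] [HasBinaryProducts C] (E : C ⥤ C)
    (ψ : ∀ A B : C, E.obj A ⨯ E.obj B ⟶ E.obj (A ⨯ B)) :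
    ∀ (n : ℕ) (A B : C),
      (functorIter E n).obj A ⨯ (functorIter E n).obj B ⟶ (functorIter E n).obj (A ⨯ B)
  | 0, A, B => 𝟙 (A ⨯ B)
  | n + 1, A, B =>
      ψ ((functorIter E n).obj A) ((functorIter E n).obj B) ≫ E.map (muIter E ψ n A B)

/- The diagonal axiom and naturality of `ψ` together say that `ψ` carries a pairing of images
under `E` to the image of the pairing: split `⟨E f, E g⟩` as `Δ ≫ (E f × E g)`, move `ψ` past the
product map, and absorb `Δ ≫ ψ` into `E Δ`. Applied to `⟨E^n π₁, E^n π₂⟩` this peels one layer off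
`μ_{n+1}`, and the equation follows by induction on `n`. -/

theorem lift_map_map_comp_eq_map_lift {C : Type*} [Category C] [HasBinaryProducts C] (E : C ⥤ C)
    (ψ : ∀ A B : C, E.obj A ⨯ E.obj B ⟶ E.obj (A ⨯ B))
    (ψ_nat : ∀ {A A' B B' : C} (f : A ⟶ A') (g : B ⟶ B'),
      prod.map (E.map f) (E.map g) ≫ ψ A' B' = ψ A B ≫ E.map (prod.map f g))
    (ψΔ : ∀ A : C, E.map (diag A) = diag (E.obj A) ≫ ψ A A) {X A B : C} (f : X ⟶ A)
    (g : X ⟶ B) : prod.lift (E.map f) (E.map g) ≫ ψ A B = E.map (prod.lift f g) :=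
  calc prod.lift (E.map f) (E.map g) ≫ ψ A B
      = diag (E.obj X) ≫ prod.map (E.map f) (E.map g) ≫ ψ A B := by simp [diag]
    _ = E.map (diag X) ≫ E.map (prod.map f g) := by rw [ψ_nat, ψΔ, Category.assoc]
    _ = E.map (prod.lift f g) := by rw [← E.map_comp]; simp [diag]

/-- If `E` is an endofunctor of a category with binary products, equipped with a
natural family `ψ_{A,B} : E A ⨯ E B ⟶ E (A ⨯ B)` satisfying `(ψΔ) : E(Δ_A) = ψ_{A,A} ∘ Δ_{EA}`,
then the extensionality equation holds:
`μ_n ∘ ⟨E^n π₁, E^n π₂⟩ = 𝟙 (E^n (A ⨯ B))` for all `n`, `A`, `B`. -/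
theorem muIter_extensionality {C : Type*} [Category C] [HasBinaryProducts C] (E : C ⥤ C)
    (ψ : ∀ A B : C, E.obj A ⨯ E.obj B ⟶ E.obj (A ⨯ B))
    (ψ_nat : ∀ {A A' B B' : C} (f : A ⟶ A') (g : B ⟶ B'),
      prod.map (E.map f) (E.map g) ≫ ψ A' B' = ψ A B ≫ E.map (prod.map f g))
    (ψΔ : ∀ A : C, E.map (diag A) = diag (E.obj A) ≫ ψ A A) :
    ∀ (n : ℕ) (A B : C),
      prod.lift ((functorIter E n).map (prod.fst : A ⨯ B ⟶ A))
          ((functorIter E n).map (prod.snd : A ⨯ B ⟶ B)) ≫ muIter E ψ n A B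
        = 𝟙 ((functorIter E n).obj (A ⨯ B)) := by
  intro n
  induction n with
  | zero =>
    intro A B
    exact (Category.comp_id _).trans prod.lift_fst_snd
  | succ n ih =>
    intro A B
    change prod.lift (E.map _) (E.map _) ≫ ψ _ _ ≫ E.map (muIter E ψ n A B) = 𝟙 (E.obj _)
    rw [← Category.assoc, lift_map_map_comp_eq_map_lift E ψ ψ_nat ψΔ, ← E.map_comp, ih,
      E.map_id]
end

section
/- The equation (ΨΨ1) holds: for all objects A₁, A₂, A₃, B₁, B₂ of C, the composite (Ψ_{A₁⊗A₃,A₂;B₁} ⊗ 1_{B₂}) ∘ Ψ_{A₁,A₃;(B₁⊗EA₂)⊗B₂} equals the composite ((E(a⁻¹_{A₁,A₃,A₂}) ∘ E(1_{A₁} ⊗ c_{A₂,A₃}) ∘ E(a_{A₁,A₂,A₃})) ⊗ 1_{B₁⊗B₂}) ∘ Ψ_{A₁⊗A₂,A₃;B₁⊗B₂} ∘ (Ψ_{A₁,A₂;B₁} ⊗ 1_{B₂⊗EA₃}), where on each side the unique structural coherence isomorphisms of C (built from a, l, r and their inverses) are inserted between the displayed factors so that the composites are well-typed morphisms with common source a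 bracketing of EA₁ ⊗ B₁ ⊗ EA₂ ⊗ B₂ ⊗ EA₃ and common target E((A₁⊗A₃)⊗A₂) ⊗ (B₁⊗B₂) (in Lean this can be expressed with monoidal coherent composition ⊗≫). -/
/-!
Since `Ψ` is a braiding followed by `ψ ▷ B`, and `ψ` slides past the braidings of the `B`-factors
(interchange law), each side is a pure braiding followed by a double application of `ψ`,
whiskered by `B₁ ⊗ B₂`. The two braidings differ by the swap of `EA₂` and `EA₃` (a Yang–Baxter
argument), and the associativity and symmetry of `ψ` carry that swap through `ψ` to `E` of the
swap of `A₂` and `A₃`.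
-/

open CategoryTheory MonoidalCategory BraidedCategory

namespace CategoryTheory.BraidedCategory

variable {C : Type*} [Category C] [MonoidalCategory C] [BraidedCategory C]

abbrev swapRight (X Y Z : C) : (X ⊗ Y) ⊗ Z ⟶ (X ⊗ Z) ⊗ Y :=
  (α_ X Y Z).hom ≫ X ◁ (β_ Y Z).hom ≫ (α_ X Z Y).inv

lemma swapRight_comp_swapRight_whiskerRight_eq {X₁ X₂ X₃ Y Z : C} (f : X₁ ⊗ X₃ ⟶ Y)
    (g : Y ⊗ X₂ ⟶ Z) (B₁ B₂ : C) :
    𝟙 (X₁ ⊗ (B₁ ⊗ (X₂ ⊗ (B₂ ⊗ X₃)))) ⊗≫ (swapRight X₁ ((B₁ ⊗ X₂) ⊗ B₂) X₃ ≫ f ▷ _) ⊗≫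
      (swapRight Y B₁ X₂ ≫ g ▷ B₁) ▷ B₂ ⊗≫ 𝟙 (Z ⊗ (B₁ ⊗ B₂))
    = (𝟙 (X₁ ⊗ (B₁ ⊗ (X₂ ⊗ (B₂ ⊗ X₃)))) ⊗≫ X₁ ◁ (β_ ((B₁ ⊗ X₂) ⊗ B₂) X₃).hom ⊗≫
        (X₁ ⊗ X₃) ◁ ((β_ B₁ X₂).hom ▷ B₂) ⊗≫ 𝟙 (((X₁ ⊗ X₃) ⊗ X₂) ⊗ (B₁ ⊗ B₂))) ≫
      (f ▷ X₂ ≫ g) ▷ (B₁ ⊗ B₂) := by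
  calc _ = 𝟙 (X₁ ⊗ (B₁ ⊗ (X₂ ⊗ (B₂ ⊗ X₃)))) ⊗≫ X₁ ◁ (β_ ((B₁ ⊗ X₂) ⊗ B₂) X₃).hom ⊗≫
        ((f ▷ (B₁ ⊗ X₂) ≫ Y ◁ (β_ B₁ X₂).hom) ▷ B₂) ⊗≫ g ▷ B₁ ▷ B₂ ⊗≫
        𝟙 (Z ⊗ (B₁ ⊗ B₂)) := by monoidal
    _ = _ := by rw [← whisker_exchange]; monoidal

lemma swapRight_whiskerRight_comp_swapRight_eq {X₁ X₂ X₃ Y Z W : C} (f : X₁ ⊗ X₂ ⟶ Y)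
    (g : Y ⊗ X₃ ⟶ Z) (h : Z ⟶ W) (B₁ B₂ : C) :
    𝟙 (X₁ ⊗ (B₁ ⊗ (X₂ ⊗ (B₂ ⊗ X₃)))) ⊗≫ (swapRight X₁ B₁ X₂ ≫ f ▷ B₁) ▷ (B₂ ⊗ X₃) ⊗≫
      (swapRight Y (B₁ ⊗ B₂) X₃ ≫ g ▷ _) ⊗≫ h ▷ (B₁ ⊗ B₂)
    = (𝟙 (X₁ ⊗ (B₁ ⊗ (X₂ ⊗ (B₂ ⊗ X₃)))) ⊗≫ X₁ ◁ ((β_ B₁ X₂).hom ▷ (B₂ ⊗ X₃)) ⊗≫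
        (X₁ ⊗ X₂) ◁ (β_ (B₁ ⊗ B₂) X₃).hom ⊗≫ 𝟙 (((X₁ ⊗ X₂) ⊗ X₃) ⊗ (B₁ ⊗ B₂))) ≫
      (f ▷ X₃ ≫ g ≫ h) ▷ (B₁ ⊗ B₂) := by
  calc _ = 𝟙 (X₁ ⊗ (B₁ ⊗ (X₂ ⊗ (B₂ ⊗ X₃)))) ⊗≫ X₁ ◁ ((β_ B₁ X₂).hom ▷ (B₂ ⊗ X₃)) ⊗≫
        (f ▷ ((B₁ ⊗ B₂) ⊗ X₃) ≫ Y ◁ (β_ (B₁ ⊗ B₂) X₃).hom) ⊗≫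
        (g ≫ h) ▷ (B₁ ⊗ B₂) := by monoidal
    _ = _ := by rw [← whisker_exchange]; monoidal

lemma braid_last_first_eq_braid_middle_first (X₁ B₁ X₂ B₂ X₃ : C) :
    𝟙 (X₁ ⊗ (B₁ ⊗ (X₂ ⊗ (B₂ ⊗ X₃)))) ⊗≫ X₁ ◁ (β_ ((B₁ ⊗ X₂) ⊗ B₂) X₃).hom ⊗≫
      (X₁ ⊗ X₃) ◁ ((β_ B₁ X₂).hom ▷ B₂) ⊗≫ 𝟙 (((X₁ ⊗ X₃) ⊗ X₂) ⊗ (B₁ ⊗ B₂))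
    = (𝟙 (X₁ ⊗ (B₁ ⊗ (X₂ ⊗ (B₂ ⊗ X₃)))) ⊗≫ X₁ ◁ ((β_ B₁ X₂).hom ▷ (B₂ ⊗ X₃)) ⊗≫
        (X₁ ⊗ X₂) ◁ (β_ (B₁ ⊗ B₂) X₃).hom ⊗≫ 𝟙 (((X₁ ⊗ X₂) ⊗ X₃) ⊗ (B₁ ⊗ B₂))) ≫
      swapRight X₁ X₂ X₃ ▷ (B₁ ⊗ B₂) := by
  calc _ = 𝟙 (X₁ ⊗ (B₁ ⊗ (X₂ ⊗ (B₂ ⊗ X₃)))) ⊗≫ X₁ ◁ B₁ ◁ X₂ ◁ (β_ B₂ X₃).hom ⊗≫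
        X₁ ◁ ((β_ B₁ X₂).hom ▷ X₃ ⊗≫ X₂ ◁ (β_ B₁ X₃).hom ⊗≫ (β_ X₂ X₃).hom ▷ B₁) ▷ B₂ ⊗≫
        𝟙 (((X₁ ⊗ X₃) ⊗ X₂) ⊗ (B₁ ⊗ B₂)) := by
          rw [yang_baxter']
          simp only [braiding_tensor_left_hom]
          monoidal
    _ = 𝟙 (X₁ ⊗ (B₁ ⊗ (X₂ ⊗ (B₂ ⊗ X₃)))) ⊗≫
        X₁ ◁ ((B₁ ⊗ X₂) ◁ (β_ B₂ X₃).hom ≫ (β_ B₁ X₂).hom ▷ (X₃ ⊗ B₂)) ⊗≫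
        X₁ ◁ (X₂ ◁ (β_ B₁ X₃).hom ⊗≫ (β_ X₂ X₃).hom ▷ B₁) ▷ B₂ ⊗≫
        𝟙 (((X₁ ⊗ X₃) ⊗ X₂) ⊗ (B₁ ⊗ B₂)) := by monoidal
    _ = _ := by
          rw [whisker_exchange]
          simp only [braiding_tensor_left_hom]
          monoidal

variable {D : Type*} [Category D] [MonoidalCategory D] [BraidedCategory D]

lemma laxStructure_comp_map_swapRight (E : C ⥤ D)
    (ψ : ∀ A B : C, E.obj A ⊗ E.obj B ⟶ E.obj (A ⊗ B))
    (ψ_nat : ∀ {A A' B B' : C} (f : A ⟶ A') (g : B ⟶ B'),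
      (E.map f ⊗ₘ E.map g) ≫ ψ A' B' = ψ A B ≫ E.map (f ⊗ₘ g))
    (ψa : ∀ A B C' : C,
      (ψ A B ⊗ₘ 𝟙 (E.obj C')) ≫ ψ (A ⊗ B) C' ≫ E.map (α_ A B C').hom
        = (α_ (E.obj A) (E.obj B) (E.obj C')).hom ≫ (𝟙 (E.obj A) ⊗ₘ ψ B C') ≫ ψ A (B ⊗ C'))
    (ψc : ∀ A B : C,
      ψ A B ≫ E.map (β_ A B).hom = (β_ (E.obj A) (E.obj B)).hom ≫ ψ B A)
    (A₁ A₂ A₃ : C) :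
    ψ A₁ A₂ ▷ E.obj A₃ ≫ ψ (A₁ ⊗ A₂) A₃ ≫ E.map (swapRight A₁ A₂ A₃)
    = swapRight (E.obj A₁) (E.obj A₂) (E.obj A₃) ≫ ψ A₁ A₃ ▷ E.obj A₂ ≫ ψ (A₁ ⊗ A₃) A₂ := by
  simp only [id_tensorHom, tensorHom_id] at ψa
  have ψ_whiskerLeft : ψ A₁ (A₂ ⊗ A₃) ≫ E.map (A₁ ◁ (β_ A₂ A₃).hom)
      = E.obj A₁ ◁ E.map (β_ A₂ A₃).hom ≫ ψ A₁ (A₃ ⊗ A₂) := by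
    simpa using (ψ_nat (𝟙 A₁) (β_ A₂ A₃).hom).symm
  have ψa_inv : E.obj A₁ ◁ ψ A₃ A₂ ≫ ψ A₁ (A₃ ⊗ A₂) ≫ E.map (α_ A₁ A₃ A₂).inv
      = (α_ (E.obj A₁) (E.obj A₃) (E.obj A₂)).inv ≫ ψ A₁ A₃ ▷ E.obj A₂ ≫ ψ (A₁ ⊗ A₃) A₂ := by
    rw [Iso.eq_inv_comp, ← reassoc_of% ψa]
    simp [← Functor.map_comp]
  calc _ = (α_ (E.obj A₁) (E.obj A₂) (E.obj A₃)).hom ≫ E.obj A₁ ◁ ψ A₂ A₃ ≫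
        ψ A₁ (A₂ ⊗ A₃) ≫ E.map (A₁ ◁ (β_ A₂ A₃).hom) ≫ E.map (α_ A₁ A₃ A₂).inv := by
          simp [reassoc_of% ψa]
    _ = (α_ (E.obj A₁) (E.obj A₂) (E.obj A₃)).hom ≫
        E.obj A₁ ◁ (ψ A₂ A₃ ≫ E.map (β_ A₂ A₃).hom) ≫ ψ A₁ (A₃ ⊗ A₂) ≫
        E.map (α_ A₁ A₃ A₂).inv := by
          rw [reassoc_of% ψ_whiskerLeft, whiskerLeft_comp_assoc]
    _ = _ := by rw [ψc, whiskerLeft_comp_assoc, ψa_inv]; simp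

end CategoryTheory.BraidedCategory

theorem PsiPsi1_general {C : Type*} [Category C] [MonoidalCategory C] [SymmetricCategory C]
    (E : C ⥤ C)
    (ψ : ∀ A B : C, E.obj A ⊗ E.obj B ⟶ E.obj (A ⊗ B))
    (ψ_nat : ∀ {A A' B B' : C} (f : A ⟶ A') (g : B ⟶ B'),
      (E.map f ⊗ₘ E.map g) ≫ ψ A' B' = ψ A B ≫ E.map (f ⊗ₘ g))
    (ψa : ∀ A B C' : C,
      (ψ A B ⊗ₘ 𝟙 (E.obj C')) ≫ ψ (A ⊗ B) C' ≫ E.map (α_ A B C').hom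
        = (α_ (E.obj A) (E.obj B) (E.obj C')).hom ≫ (𝟙 (E.obj A) ⊗ₘ ψ B C') ≫ ψ A (B ⊗ C'))
    (ψc : ∀ A B : C,
      ψ A B ≫ E.map (β_ A B).hom = (β_ (E.obj A) (E.obj B)).hom ≫ ψ B A)
    (Ψ : ∀ A₁ A₂ B : C, (E.obj A₁ ⊗ B) ⊗ E.obj A₂ ⟶ E.obj (A₁ ⊗ A₂) ⊗ B)
    (hΨ : ∀ A₁ A₂ B : C,
      Ψ A₁ A₂ B = (α_ (E.obj A₁) B (E.obj A₂)).hom ≫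
        (𝟙 (E.obj A₁) ⊗ₘ (β_ B (E.obj A₂)).hom) ≫
        (α_ (E.obj A₁) (E.obj A₂) B).inv ≫ (ψ A₁ A₂ ⊗ₘ 𝟙 B)) :
    ∀ A₁ A₂ A₃ B₁ B₂ : C,
      (𝟙 (E.obj A₁ ⊗ (B₁ ⊗ (E.obj A₂ ⊗ (B₂ ⊗ E.obj A₃)))) ⊗≫
        Ψ A₁ A₃ ((B₁ ⊗ E.obj A₂) ⊗ B₂) ⊗≫
        (Ψ (A₁ ⊗ A₃) A₂ B₁ ⊗ₘ 𝟙 B₂) ⊗≫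
        𝟙 (E.obj ((A₁ ⊗ A₃) ⊗ A₂) ⊗ (B₁ ⊗ B₂)))
      = (𝟙 (E.obj A₁ ⊗ (B₁ ⊗ (E.obj A₂ ⊗ (B₂ ⊗ E.obj A₃)))) ⊗≫
        (Ψ A₁ A₂ B₁ ⊗ₘ 𝟙 (B₂ ⊗ E.obj A₃)) ⊗≫
        Ψ (A₁ ⊗ A₂) A₃ (B₁ ⊗ B₂) ⊗≫
        ((E.map (α_ A₁ A₂ A₃).hom ≫ E.map (𝟙 A₁ ⊗ₘ (β_ A₂ A₃).hom) ≫
            E.map (α_ A₁ A₃ A₂).inv) ⊗ₘ 𝟙 (B₁ ⊗ B₂))) := by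
  intro A₁ A₂ A₃ B₁ B₂
  obtain rfl : Ψ = fun A₁ A₂ B ↦ swapRight (E.obj A₁) B (E.obj A₂) ≫ ψ A₁ A₂ ▷ B := by
    funext A₁ A₂ B
    simp [hΨ]
  simp only [tensorHom_id, id_tensorHom, ← Functor.map_comp]
  rw [swapRight_comp_swapRight_whiskerRight_eq, swapRight_whiskerRight_comp_swapRight_eq,
    laxStructure_comp_map_swapRight E ψ ψ_nat ψa ψc, braid_last_first_eq_braid_middle_first]
  simp only [Category.assoc, comp_whiskerRight]

set_option maxHeartbeats 1000000 in
/-- For a linear (symmetric lax monoidal) endofunctor `E` of a symmetric monoidal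
category, with `Ψ_{A₁,A₂;B} := (ψ_{A₁,A₂} ⊗ 1_B) ∘ a⁻¹ ∘ (1_{EA₁} ⊗ c_{B,EA₂}) ∘ a`,
the equation (ΨΨ1) holds (structural coherence isomorphisms inserted via `⊗≫`). -/
theorem PsiPsi1 {C : Type*} [Category C] [MonoidalCategory C] [SymmetricCategory C]
    (E : C ⥤ C)
    (ψ : ∀ A B : C, E.obj A ⊗ E.obj B ⟶ E.obj (A ⊗ B))
    (ψ₀ : 𝟙_ C ⟶ E.obj (𝟙_ C))
    (ψ_nat : ∀ {A A' B B' : C} (f : A ⟶ A') (g : B ⟶ B'),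
      (E.map f ⊗ₘ E.map g) ≫ ψ A' B' = ψ A B ≫ E.map (f ⊗ₘ g))
    (ψa : ∀ A B C' : C,
      (ψ A B ⊗ₘ 𝟙 (E.obj C')) ≫ ψ (A ⊗ B) C' ≫ E.map (α_ A B C').hom
        = (α_ (E.obj A) (E.obj B) (E.obj C')).hom ≫ (𝟙 (E.obj A) ⊗ₘ ψ B C') ≫ ψ A (B ⊗ C'))
    (ψl : ∀ A : C,
      (ψ₀ ⊗ₘ 𝟙 (E.obj A)) ≫ ψ (𝟙_ C) A ≫ E.map (λ_ A).hom = (λ_ (E.obj A)).hom)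
    (ψr : ∀ A : C,
      (𝟙 (E.obj A) ⊗ₘ ψ₀) ≫ ψ A (𝟙_ C) ≫ E.map (ρ_ A).hom = (ρ_ (E.obj A)).hom)
    (ψc : ∀ A B : C,
      ψ A B ≫ E.map (β_ A B).hom = (β_ (E.obj A) (E.obj B)).hom ≫ ψ B A)
    (Ψ : ∀ A₁ A₂ B : C, (E.obj A₁ ⊗ B) ⊗ E.obj A₂ ⟶ E.obj (A₁ ⊗ A₂) ⊗ B)
    (hΨ : ∀ A₁ A₂ B : C,
      Ψ A₁ A₂ B = (α_ (E.obj A₁) B (E.obj A₂)).hom ≫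
        (𝟙 (E.obj A₁) ⊗ₘ (β_ B (E.obj A₂)).hom) ≫
        (α_ (E.obj A₁) (E.obj A₂) B).inv ≫ (ψ A₁ A₂ ⊗ₘ 𝟙 B)) :
    ∀ A₁ A₂ A₃ B₁ B₂ : C,
      (𝟙 (E.obj A₁ ⊗ (B₁ ⊗ (E.obj A₂ ⊗ (B₂ ⊗ E.obj A₃)))) ⊗≫
        Ψ A₁ A₃ ((B₁ ⊗ E.obj A₂) ⊗ B₂) ⊗≫
        (Ψ (A₁ ⊗ A₃) A₂ B₁ ⊗ₘ 𝟙 B₂) ⊗≫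
        𝟙 (E.obj ((A₁ ⊗ A₃) ⊗ A₂) ⊗ (B₁ ⊗ B₂)))
      = (𝟙 (E.obj A₁ ⊗ (B₁ ⊗ (E.obj A₂ ⊗ (B₂ ⊗ E.obj A₃)))) ⊗≫
        (Ψ A₁ A₂ B₁ ⊗ₘ 𝟙 (B₂ ⊗ E.obj A₃)) ⊗≫
        Ψ (A₁ ⊗ A₂) A₃ (B₁ ⊗ B₂) ⊗≫
        ((E.map (α_ A₁ A₂ A₃).hom ≫ E.map (𝟙 A₁ ⊗ₘ (β_ A₂ A₃).hom) ≫
            E.map (α_ A₁ A₃ A₂).inv) ⊗ₘ 𝟙 (B₁ ⊗ B₂))) :=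
  PsiPsi1_general E ψ ψ_nat ψa ψc Ψ hΨ
end

section
/- The equation (ΨΨ2) holds: for all objects A₁, A₂, A₃, B₁, B₂ of C, the composite (Ψ_{A₁,A₂⊗A₃;B₁} ⊗ 1_{B₂}) ∘ (1_{EA₁⊗B₁} ⊗ Ψ_{A₂,A₃;B₂}) equals the composite (E(a_{A₁,A₂,A₃}) ⊗ 1_{B₁⊗B₂}) ∘ Ψ_{A₁⊗A₂,A₃;B₁⊗B₂} ∘ (Ψ_{A₁,A₂;B₁} ⊗ 1_{B₂⊗EA₃}), where on each side the unique structural coherence isomorphisms of C (built from a, l, r and their inverses) are inserted between the displayed factors so that the composites are well-typed morphisms with common source a bracketing of EA₁ ⊗ B₁ ⊗ EA₂ ⊗ B₂ ⊗ EA₃ and common target E(A₁⊗(A₂⊗A₃)) ⊗ (B₁⊗B₂) (in Lean this can be expressed with monoidal coherent composition ⊗≫). -/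
/-!
`Ψ_{A₁,A₂;B}` is `ψ_{A₁,A₂} ⊗ B` preceded by braiding `B` past `EA₂`. Both sides of (ΨΨ2)
therefore factor as one and the same braid, moving `B₁` and `B₂` to the right of
`EA₁, EA₂, EA₃` (the hexagon identities identify the two braids that arise), followed by
`(ψ_{A₁,A₂⊗A₃} ∘ (1 ⊗ ψ_{A₂,A₃})) ⊗ 1` on the left and `(E(a) ∘ ψ_{A₁⊗A₂,A₃} ∘ (ψ_{A₁,A₂} ⊗ 1)) ⊗ 1`
on the right; these agree by (ψ a).
-/

open CategoryTheory MonoidalCategory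

namespace CategoryTheory.MonoidalCategory

variable {C : Type*} [Category C] [MonoidalCategory C] [BraidedCategory C]

/-- The paper's `Ψ_{A₁,A₂;B}` is `applyAcross (ψ A₁ A₂) B`. -/
def applyAcross {X Y Z : C} (f : X ⊗ Y ⟶ Z) (B : C) : (X ⊗ B) ⊗ Y ⟶ Z ⊗ B :=
  (α_ X B Y).hom ≫ X ◁ (β_ B Y).hom ≫ (α_ X Y B).inv ≫ f ▷ B

def shuffleRight (X₁ X₂ X₃ B₁ B₂ : C) :
    X₁ ⊗ (B₁ ⊗ (X₂ ⊗ (B₂ ⊗ X₃))) ⟶ ((X₁ ⊗ X₂) ⊗ X₃) ⊗ (B₁ ⊗ B₂) :=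
  𝟙 _ ⊗≫ X₁ ◁ B₁ ◁ X₂ ◁ (β_ B₂ X₃).hom ⊗≫ X₁ ◁ (β_ B₁ (X₂ ⊗ X₃)).hom ▷ B₂ ⊗≫ 𝟙 _

variable {X₁ X₂ X₃ B₁ B₂ : C}

lemma applyAcross_whiskerLeft_applyAcross {Y Z : C} (f : X₂ ⊗ X₃ ⟶ Y) (g : X₁ ⊗ Y ⟶ Z) :
    𝟙 (X₁ ⊗ (B₁ ⊗ (X₂ ⊗ (B₂ ⊗ X₃)))) ⊗≫ (X₁ ⊗ B₁) ◁ applyAcross f B₂ ⊗≫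
      applyAcross g B₁ ▷ B₂ ⊗≫ 𝟙 (Z ⊗ (B₁ ⊗ B₂)) =
    shuffleRight X₁ X₂ X₃ B₁ B₂ ⊗≫ ((α_ X₁ X₂ X₃).hom ≫ X₁ ◁ f ≫ g) ▷ (B₁ ⊗ B₂) := by
  calc
    _ = 𝟙 _ ⊗≫ X₁ ◁ B₁ ◁ X₂ ◁ (β_ B₂ X₃).hom ⊗≫
        X₁ ◁ ((B₁ ◁ f ≫ (β_ B₁ Y).hom) ▷ B₂) ⊗≫ g ▷ (B₁ ⊗ B₂) := by
      unfold applyAcross; monoidal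
    _ = _ := by
      rw [BraidedCategory.braiding_naturality_right]; unfold shuffleRight; monoidal

lemma applyAcross_whiskerRight_applyAcross {W Z : C} (h : X₁ ⊗ X₂ ⟶ W) (k : W ⊗ X₃ ⟶ Z) :
    𝟙 (X₁ ⊗ (B₁ ⊗ (X₂ ⊗ (B₂ ⊗ X₃)))) ⊗≫ applyAcross h B₁ ▷ (B₂ ⊗ X₃) ⊗≫
      applyAcross k (B₁ ⊗ B₂) =
    shuffleRight X₁ X₂ X₃ B₁ B₂ ⊗≫ (h ▷ X₃ ≫ k) ▷ (B₁ ⊗ B₂) := by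
  calc
    _ = 𝟙 _ ⊗≫ X₁ ◁ (β_ B₁ X₂).hom ▷ (B₂ ⊗ X₃) ⊗≫
        (h ▷ (B₁ ⊗ (B₂ ⊗ X₃)) ≫ W ◁ (B₁ ◁ (β_ B₂ X₃).hom ⊗≫ (β_ B₁ X₃).hom ▷ B₂)) ⊗≫
        k ▷ (B₁ ⊗ B₂) := by
      unfold applyAcross; rw [BraidedCategory.braiding_tensor_left_hom]; monoidal
    _ = 𝟙 _ ⊗≫ X₁ ◁ ((β_ B₁ X₂).hom ▷ (B₂ ⊗ X₃) ≫ (X₂ ⊗ B₁) ◁ (β_ B₂ X₃).hom) ⊗≫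
        (X₁ ⊗ X₂) ◁ (β_ B₁ X₃).hom ▷ B₂ ⊗≫ (h ▷ X₃ ≫ k) ▷ (B₁ ⊗ B₂) := by
      rw [← whisker_exchange]; monoidal
    _ = _ := by
      rw [← whisker_exchange]; unfold shuffleRight; rw [BraidedCategory.braiding_tensor_right_hom]
      monoidal

lemma applyAcross_assoc {Y Z W Z' : C} (f : X₂ ⊗ X₃ ⟶ Y) (g : X₁ ⊗ Y ⟶ Z)
    (h : X₁ ⊗ X₂ ⟶ W) (k : W ⊗ X₃ ⟶ Z') (e : Z' ⟶ Z)
    (H : h ▷ X₃ ≫ k ≫ e = (α_ X₁ X₂ X₃).hom ≫ X₁ ◁ f ≫ g) :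
    𝟙 (X₁ ⊗ (B₁ ⊗ (X₂ ⊗ (B₂ ⊗ X₃)))) ⊗≫ (X₁ ⊗ B₁) ◁ applyAcross f B₂ ⊗≫
      applyAcross g B₁ ▷ B₂ ⊗≫ 𝟙 (Z ⊗ (B₁ ⊗ B₂)) =
    𝟙 (X₁ ⊗ (B₁ ⊗ (X₂ ⊗ (B₂ ⊗ X₃)))) ⊗≫ applyAcross h B₁ ▷ (B₂ ⊗ X₃) ⊗≫
      applyAcross k (B₁ ⊗ B₂) ⊗≫ e ▷ (B₁ ⊗ B₂) := by
  calc
    _ = shuffleRight X₁ X₂ X₃ B₁ B₂ ⊗≫ ((α_ X₁ X₂ X₃).hom ≫ X₁ ◁ f ≫ g) ▷ (B₁ ⊗ B₂) :=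
      applyAcross_whiskerLeft_applyAcross f g
    _ = (shuffleRight X₁ X₂ X₃ B₁ B₂ ⊗≫ (h ▷ X₃ ≫ k) ▷ (B₁ ⊗ B₂)) ≫ e ▷ (B₁ ⊗ B₂) := by
      rw [← H]; monoidal
    _ = _ := by
      rw [← applyAcross_whiskerRight_applyAcross]; monoidal

end CategoryTheory.MonoidalCategory

theorem PsiPsi2_general {C : Type*} [Category C] [MonoidalCategory C] [SymmetricCategory C]
    (E : C ⥤ C)
    (ψ : ∀ A B : C, E.obj A ⊗ E.obj B ⟶ E.obj (A ⊗ B))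
    (ψa : ∀ A B C' : C,
      (ψ A B ⊗ₘ 𝟙 (E.obj C')) ≫ ψ (A ⊗ B) C' ≫ E.map (α_ A B C').hom
        = (α_ (E.obj A) (E.obj B) (E.obj C')).hom ≫ (𝟙 (E.obj A) ⊗ₘ ψ B C') ≫ ψ A (B ⊗ C'))
    (Ψ : ∀ A₁ A₂ B : C, (E.obj A₁ ⊗ B) ⊗ E.obj A₂ ⟶ E.obj (A₁ ⊗ A₂) ⊗ B)
    (hΨ : ∀ A₁ A₂ B : C,
      Ψ A₁ A₂ B = (α_ (E.obj A₁) B (E.obj A₂)).hom ≫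
        (𝟙 (E.obj A₁) ⊗ₘ (β_ B (E.obj A₂)).hom) ≫
        (α_ (E.obj A₁) (E.obj A₂) B).inv ≫ (ψ A₁ A₂ ⊗ₘ 𝟙 B)) :
    ∀ A₁ A₂ A₃ B₁ B₂ : C,
      (𝟙 (E.obj A₁ ⊗ (B₁ ⊗ (E.obj A₂ ⊗ (B₂ ⊗ E.obj A₃)))) ⊗≫
        (𝟙 (E.obj A₁ ⊗ B₁) ⊗ₘ Ψ A₂ A₃ B₂) ⊗≫
        (Ψ A₁ (A₂ ⊗ A₃) B₁ ⊗ₘ 𝟙 B₂) ⊗≫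
        𝟙 (E.obj (A₁ ⊗ (A₂ ⊗ A₃)) ⊗ (B₁ ⊗ B₂)))
      = (𝟙 (E.obj A₁ ⊗ (B₁ ⊗ (E.obj A₂ ⊗ (B₂ ⊗ E.obj A₃)))) ⊗≫
        (Ψ A₁ A₂ B₁ ⊗ₘ 𝟙 (B₂ ⊗ E.obj A₃)) ⊗≫
        Ψ (A₁ ⊗ A₂) A₃ (B₁ ⊗ B₂) ⊗≫
        (E.map (α_ A₁ A₂ A₃).hom ⊗ₘ 𝟙 (B₁ ⊗ B₂))) := by
  intro A₁ A₂ A₃ B₁ B₂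
  have hΨ_eq : ∀ A₁ A₂ B : C, Ψ A₁ A₂ B = applyAcross (ψ A₁ A₂) B := fun A₁ A₂ B => by
    rw [hΨ, id_tensorHom, tensorHom_id, applyAcross]
  simp only [hΨ_eq, id_tensorHom, tensorHom_id]
  refine applyAcross_assoc _ _ _ _ _ ?_
  simpa only [id_tensorHom, tensorHom_id] using ψa A₁ A₂ A₃

set_option maxHeartbeats 1000000 in
/-- For a linear (symmetric lax monoidal) endofunctor `E` of a symmetric monoidal
category, with `Ψ_{A₁,A₂;B} := (ψ_{A₁,A₂} ⊗ 1_B) ∘ a⁻¹ ∘ (1_{EA₁} ⊗ c_{B,EA₂}) ∘ a`,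
the equation (ΨΨ2) holds (structural coherence isomorphisms inserted via `⊗≫`). -/
theorem PsiPsi2 {C : Type*} [Category C] [MonoidalCategory C] [SymmetricCategory C]
    (E : C ⥤ C)
    (ψ : ∀ A B : C, E.obj A ⊗ E.obj B ⟶ E.obj (A ⊗ B))
    (ψ₀ : 𝟙_ C ⟶ E.obj (𝟙_ C))
    (ψ_nat : ∀ {A A' B B' : C} (f : A ⟶ A') (g : B ⟶ B'),
      (E.map f ⊗ₘ E.map g) ≫ ψ A' B' = ψ A B ≫ E.map (f ⊗ₘ g))
    (ψa : ∀ A B C' : C,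
      (ψ A B ⊗ₘ 𝟙 (E.obj C')) ≫ ψ (A ⊗ B) C' ≫ E.map (α_ A B C').hom
        = (α_ (E.obj A) (E.obj B) (E.obj C')).hom ≫ (𝟙 (E.obj A) ⊗ₘ ψ B C') ≫ ψ A (B ⊗ C'))
    (ψl : ∀ A : C,
      (ψ₀ ⊗ₘ 𝟙 (E.obj A)) ≫ ψ (𝟙_ C) A ≫ E.map (λ_ A).hom = (λ_ (E.obj A)).hom)
    (ψr : ∀ A : C,
      (𝟙 (E.obj A) ⊗ₘ ψ₀) ≫ ψ A (𝟙_ C) ≫ E.map (ρ_ A).hom = (ρ_ (E.obj A)).hom)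
    (ψc : ∀ A B : C,
      ψ A B ≫ E.map (β_ A B).hom = (β_ (E.obj A) (E.obj B)).hom ≫ ψ B A)
    (Ψ : ∀ A₁ A₂ B : C, (E.obj A₁ ⊗ B) ⊗ E.obj A₂ ⟶ E.obj (A₁ ⊗ A₂) ⊗ B)
    (hΨ : ∀ A₁ A₂ B : C,
      Ψ A₁ A₂ B = (α_ (E.obj A₁) B (E.obj A₂)).hom ≫
        (𝟙 (E.obj A₁) ⊗ₘ (β_ B (E.obj A₂)).hom) ≫
        (α_ (E.obj A₁) (E.obj A₂) B).inv ≫ (ψ A₁ A₂ ⊗ₘ 𝟙 B)) :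
    ∀ A₁ A₂ A₃ B₁ B₂ : C,
      (𝟙 (E.obj A₁ ⊗ (B₁ ⊗ (E.obj A₂ ⊗ (B₂ ⊗ E.obj A₃)))) ⊗≫
        (𝟙 (E.obj A₁ ⊗ B₁) ⊗ₘ Ψ A₂ A₃ B₂) ⊗≫
        (Ψ A₁ (A₂ ⊗ A₃) B₁ ⊗ₘ 𝟙 B₂) ⊗≫
        𝟙 (E.obj (A₁ ⊗ (A₂ ⊗ A₃)) ⊗ (B₁ ⊗ B₂)))
      = (𝟙 (E.obj A₁ ⊗ (B₁ ⊗ (E.obj A₂ ⊗ (B₂ ⊗ E.obj A₃)))) ⊗≫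
        (Ψ A₁ A₂ B₁ ⊗ₘ 𝟙 (B₂ ⊗ E.obj A₃)) ⊗≫
        Ψ (A₁ ⊗ A₂) A₃ (B₁ ⊗ B₂) ⊗≫
        (E.map (α_ A₁ A₂ A₃).hom ⊗ₘ 𝟙 (B₁ ⊗ B₂))) :=
  PsiPsi2_general E ψ ψa Ψ hΨ
end

section
/- The equation (Ψc1) holds: for all objects A₁, A₂, B₁, B₂ of C, the composite Ψ_{A₁,A₂;B₁⊗B₂} ∘ (c_{B₁,EA₁} ⊗ 1_{B₂⊗EA₂}) equals the composite (c_{B₁,E(A₁⊗A₂)} ⊗ 1_{B₂}) ∘ (1_{B₁} ⊗ Ψ_{A₁,A₂;B₂}), where on each side the unique structural coherence isomorphisms of C (built from a, l, r and their inverses) are inserted between the displayed factors so that the composites are well-typed morphisms with common source a bracketing of B₁ ⊗ EA₁ ⊗ B₂ ⊗ EA₂ and common target E(A₁⊗A₂) ⊗ (B₁⊗B₂) (in Lean this can be expressed with monoidal coherent composition ⊗≫). -/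
/-!
The morphism `ψ_{A₁,A₂}` enters each side exactly once, so (Ψc1) holds for any `f : X ⊗ Y ⟶ Z`
in place of `ψ` and any braided category. Expanding `β_{B₁⊗B₂,Y}` and `β_{B₁,X⊗Y}` by the two
hexagon identities, and sliding `f` past the braiding of `B₁` by naturality, both sides become
`(β_{B₁,X} ⊗ β_{B₂,Y}) ≫ X ◁ β_{B₁,Y} ▷ B₂ ≫ f ▷ B₁ ▷ B₂` up to associators.
-/

open CategoryTheory MonoidalCategory

namespace CategoryTheory.MonoidalCategory

variable {C : Type*} [Category C] [MonoidalCategory C] [BraidedCategory C]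

def braidThen {X Y Z : C} (f : X ⊗ Y ⟶ Z) (B : C) : (X ⊗ B) ⊗ Y ⟶ Z ⊗ B :=
  (α_ X B Y).hom ≫ (𝟙 X ⊗ₘ (β_ B Y).hom) ≫ (α_ X Y B).inv ≫ (f ⊗ₘ 𝟙 B)

theorem braiding_tensor_comp_braidThen {X Y Z : C} (f : X ⊗ Y ⟶ Z) (B₁ B₂ : C) :
    (𝟙 (B₁ ⊗ (X ⊗ (B₂ ⊗ Y))) ⊗≫ ((β_ B₁ X).hom ⊗ₘ 𝟙 (B₂ ⊗ Y)) ⊗≫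
        braidThen f (B₁ ⊗ B₂) ⊗≫ 𝟙 (Z ⊗ (B₁ ⊗ B₂)))
      = (𝟙 (B₁ ⊗ (X ⊗ (B₂ ⊗ Y))) ⊗≫ (𝟙 B₁ ⊗ₘ braidThen f B₂) ⊗≫
        ((β_ B₁ Z).hom ⊗ₘ 𝟙 B₂) ⊗≫ 𝟙 (Z ⊗ (B₁ ⊗ B₂))) := by
  calc _ = 𝟙 _ ⊗≫ ((β_ B₁ X).hom ⊗ₘ (β_ B₂ Y).hom) ⊗≫ X ◁ (β_ B₁ Y).hom ▷ B₂ ⊗≫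
          f ▷ B₁ ▷ B₂ ⊗≫ 𝟙 (Z ⊗ (B₁ ⊗ B₂)) := by
        rw [braidThen, BraidedCategory.braiding_tensor_left_hom, tensorHom_def _ (β_ B₂ Y).hom]
        monoidal
    _ = 𝟙 _ ⊗≫ B₁ ◁ X ◁ (β_ B₂ Y).hom ⊗≫ (β_ B₁ (X ⊗ Y)).hom ▷ B₂ ⊗≫
          f ▷ B₁ ▷ B₂ ⊗≫ 𝟙 (Z ⊗ (B₁ ⊗ B₂)) := by
        rw [BraidedCategory.braiding_tensor_right_hom, tensorHom_def']
        monoidal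
    _ = 𝟙 _ ⊗≫ B₁ ◁ X ◁ (β_ B₂ Y).hom ⊗≫ (B₁ ◁ f ≫ (β_ B₁ Z).hom) ▷ B₂ ⊗≫
          𝟙 (Z ⊗ (B₁ ⊗ B₂)) := by
        rw [BraidedCategory.braiding_naturality_right]
        monoidal
    _ = _ := by
        rw [braidThen]
        monoidal

end CategoryTheory.MonoidalCategory

theorem Psic1_general {C : Type*} [Category C] [MonoidalCategory C] [SymmetricCategory C]
    (E : C ⥤ C)
    (ψ : ∀ A B : C, E.obj A ⊗ E.obj B ⟶ E.obj (A ⊗ B))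
    (Ψ : ∀ A₁ A₂ B : C, (E.obj A₁ ⊗ B) ⊗ E.obj A₂ ⟶ E.obj (A₁ ⊗ A₂) ⊗ B)
    (hΨ : ∀ A₁ A₂ B : C,
      Ψ A₁ A₂ B = (α_ (E.obj A₁) B (E.obj A₂)).hom ≫
        (𝟙 (E.obj A₁) ⊗ₘ (β_ B (E.obj A₂)).hom) ≫
        (α_ (E.obj A₁) (E.obj A₂) B).inv ≫ (ψ A₁ A₂ ⊗ₘ 𝟙 B)) :
    ∀ A₁ A₂ B₁ B₂ : C,
      (𝟙 (B₁ ⊗ (E.obj A₁ ⊗ (B₂ ⊗ E.obj A₂))) ⊗≫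
        ((β_ B₁ (E.obj A₁)).hom ⊗ₘ 𝟙 (B₂ ⊗ E.obj A₂)) ⊗≫
        Ψ A₁ A₂ (B₁ ⊗ B₂) ⊗≫
        𝟙 (E.obj (A₁ ⊗ A₂) ⊗ (B₁ ⊗ B₂)))
      = (𝟙 (B₁ ⊗ (E.obj A₁ ⊗ (B₂ ⊗ E.obj A₂))) ⊗≫
        (𝟙 B₁ ⊗ₘ Ψ A₁ A₂ B₂) ⊗≫
        ((β_ B₁ (E.obj (A₁ ⊗ A₂))).hom ⊗ₘ 𝟙 B₂) ⊗≫
        𝟙 (E.obj (A₁ ⊗ A₂) ⊗ (B₁ ⊗ B₂))) := by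
  intro A₁ A₂ B₁ B₂
  rw [hΨ, hΨ]
  exact braiding_tensor_comp_braidThen (ψ A₁ A₂) B₁ B₂

set_option maxHeartbeats 1000000 in
/-- For a linear (symmetric lax monoidal) endofunctor `E` of a symmetric monoidal
category, with `Ψ_{A₁,A₂;B} := (ψ_{A₁,A₂} ⊗ 1_B) ∘ a⁻¹ ∘ (1_{EA₁} ⊗ c_{B,EA₂}) ∘ a`,
the equation (Ψc1) holds (structural coherence isomorphisms inserted via `⊗≫`). -/
theorem Psic1 {C : Type*} [Category C] [MonoidalCategory C] [SymmetricCategory C]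
    (E : C ⥤ C)
    (ψ : ∀ A B : C, E.obj A ⊗ E.obj B ⟶ E.obj (A ⊗ B))
    (ψ₀ : 𝟙_ C ⟶ E.obj (𝟙_ C))
    (ψ_nat : ∀ {A A' B B' : C} (f : A ⟶ A') (g : B ⟶ B'),
      (E.map f ⊗ₘ E.map g) ≫ ψ A' B' = ψ A B ≫ E.map (f ⊗ₘ g))
    (ψa : ∀ A B C' : C,
      (ψ A B ⊗ₘ 𝟙 (E.obj C')) ≫ ψ (A ⊗ B) C' ≫ E.map (α_ A B C').hom
        = (α_ (E.obj A) (E.obj B) (E.obj C')).hom ≫ (𝟙 (E.obj A) ⊗ₘ ψ B C') ≫ ψ A (B ⊗ C'))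
    (ψl : ∀ A : C,
      (ψ₀ ⊗ₘ 𝟙 (E.obj A)) ≫ ψ (𝟙_ C) A ≫ E.map (λ_ A).hom = (λ_ (E.obj A)).hom)
    (ψr : ∀ A : C,
      (𝟙 (E.obj A) ⊗ₘ ψ₀) ≫ ψ A (𝟙_ C) ≫ E.map (ρ_ A).hom = (ρ_ (E.obj A)).hom)
    (ψc : ∀ A B : C,
      ψ A B ≫ E.map (β_ A B).hom = (β_ (E.obj A) (E.obj B)).hom ≫ ψ B A)
    (Ψ : ∀ A₁ A₂ B : C, (E.obj A₁ ⊗ B) ⊗ E.obj A₂ ⟶ E.obj (A₁ ⊗ A₂) ⊗ B)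
    (hΨ : ∀ A₁ A₂ B : C,
      Ψ A₁ A₂ B = (α_ (E.obj A₁) B (E.obj A₂)).hom ≫
        (𝟙 (E.obj A₁) ⊗ₘ (β_ B (E.obj A₂)).hom) ≫
        (α_ (E.obj A₁) (E.obj A₂) B).inv ≫ (ψ A₁ A₂ ⊗ₘ 𝟙 B)) :
    ∀ A₁ A₂ B₁ B₂ : C,
      (𝟙 (B₁ ⊗ (E.obj A₁ ⊗ (B₂ ⊗ E.obj A₂))) ⊗≫
        ((β_ B₁ (E.obj A₁)).hom ⊗ₘ 𝟙 (B₂ ⊗ E.obj A₂)) ⊗≫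
        Ψ A₁ A₂ (B₁ ⊗ B₂) ⊗≫
        𝟙 (E.obj (A₁ ⊗ A₂) ⊗ (B₁ ⊗ B₂)))
      = (𝟙 (B₁ ⊗ (E.obj A₁ ⊗ (B₂ ⊗ E.obj A₂))) ⊗≫
        (𝟙 B₁ ⊗ₘ Ψ A₁ A₂ B₂) ⊗≫
        ((β_ B₁ (E.obj (A₁ ⊗ A₂))).hom ⊗ₘ 𝟙 B₂) ⊗≫
        𝟙 (E.obj (A₁ ⊗ A₂) ⊗ (B₁ ⊗ B₂))) :=
  Psic1_general E ψ Ψ hΨ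
end

section
/- The equation (Ψc2) holds: for all objects A₁, A₂, B₁, B₂ of C, the composite (1_{B₁} ⊗ Ψ_{A₁,A₂;B₂}) ∘ (c_{EA₁,B₁} ⊗ 1_{B₂⊗EA₂}) equals the composite (c_{E(A₁⊗A₂),B₁} ⊗ 1_{B₂}) ∘ Ψ_{A₁,A₂;B₁⊗B₂}, where on each side the unique structural coherence isomorphisms of C (built from a, l, r and their inverses) are inserted between the displayed factors so that the composites are well-typed morphisms with common source a bracketing of EA₁ ⊗ B₁ ⊗ B₂ ⊗ EA₂ and common target B₁ ⊗ (E(A₁⊗A₂) ⊗ B₂) (in Lean this can be expressed with monoidal coherent composition ⊗≫). -/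
/-!
`Ψ_{A₁,A₂;B}` uses `ψ` only through its last factor `ψ ▷ B`, so (Ψc2) holds with `ψ` replaced by
any morphism `f : X ⊗ Y ⟶ Z`. Naturality of the braiding moves `f` to the end of both sides; what
remains are two braidings `X B₁ B₂ Y ⟶ B₁ X Y B₂`, which agree by the hexagon identities once
symmetry cancels the double crossing of `B₁` and `Y` on the right-hand side.
-/

open CategoryTheory MonoidalCategory

namespace CategoryTheory.SymmetricCategory
variable {C : Type*} [Category C] [MonoidalCategory C] [SymmetricCategory C]

def braidMid {X Y Z : C} (f : X ⊗ Y ⟶ Z) (B : C) : (X ⊗ B) ⊗ Y ⟶ Z ⊗ B :=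
  (α_ X B Y).hom ≫ X ◁ (β_ B Y).hom ≫ (α_ X Y B).inv ≫ f ▷ B

lemma braiding_whiskerRight_comp_whiskerLeft_braiding (X Y B₁ B₂ : C) :
    𝟙 _ ⊗≫ (β_ X B₁).hom ▷ (B₂ ⊗ Y) ⊗≫ B₁ ◁ X ◁ (β_ B₂ Y).hom ⊗≫ 𝟙 (B₁ ⊗ (X ⊗ Y) ⊗ B₂)
      = 𝟙 (X ⊗ B₁ ⊗ B₂ ⊗ Y) ⊗≫ X ◁ (β_ (B₁ ⊗ B₂) Y).hom ⊗≫ (β_ (X ⊗ Y) B₁).hom ▷ B₂ ⊗≫ 𝟙 _ := by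
  calc _ = 𝟙 _ ⊗≫ ((β_ X B₁).hom ▷ (B₂ ⊗ Y) ≫ (B₁ ⊗ X) ◁ (β_ B₂ Y).hom) ⊗≫ 𝟙 _ := by monoidal
    _ = 𝟙 _ ⊗≫ X ◁ B₁ ◁ (β_ B₂ Y).hom ⊗≫ (β_ X B₁).hom ▷ Y ▷ B₂ ⊗≫ 𝟙 _ := by
          rw [← whisker_exchange]; monoidal
    _ = 𝟙 _ ⊗≫ X ◁ B₁ ◁ (β_ B₂ Y).hom ⊗≫ X ◁ ((β_ B₁ Y).hom ≫ (β_ Y B₁).hom) ▷ B₂ ⊗≫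
          (β_ X B₁).hom ▷ Y ▷ B₂ ⊗≫ 𝟙 _ := by rw [symmetry]; monoidal
    _ = _ := by
      rw [BraidedCategory.braiding_tensor_left_hom, BraidedCategory.braiding_tensor_left_hom]
      monoidal

lemma braiding_whiskerRight_comp_whiskerLeft_braidMid {X Y Z : C} (f : X ⊗ Y ⟶ Z) (B₁ B₂ : C) :
    𝟙 _ ⊗≫ (β_ X B₁).hom ▷ (B₂ ⊗ Y) ⊗≫ B₁ ◁ braidMid f B₂ ⊗≫ 𝟙 (B₁ ⊗ Z ⊗ B₂)
      = 𝟙 (X ⊗ B₁ ⊗ B₂ ⊗ Y) ⊗≫ braidMid f (B₁ ⊗ B₂) ⊗≫ (β_ Z B₁).hom ▷ B₂ ⊗≫ 𝟙 _ := by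
  calc _ = (𝟙 (X ⊗ B₁ ⊗ B₂ ⊗ Y) ⊗≫ (β_ X B₁).hom ▷ (B₂ ⊗ Y) ⊗≫ B₁ ◁ X ◁ (β_ B₂ Y).hom ⊗≫
          𝟙 (B₁ ⊗ (X ⊗ Y) ⊗ B₂)) ⊗≫ B₁ ◁ f ▷ B₂ ⊗≫ 𝟙 _ := by
          simp only [braidMid]; monoidal
    _ = (𝟙 (X ⊗ B₁ ⊗ B₂ ⊗ Y) ⊗≫ X ◁ (β_ (B₁ ⊗ B₂) Y).hom ⊗≫ (β_ (X ⊗ Y) B₁).hom ▷ B₂ ⊗≫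
          𝟙 (B₁ ⊗ (X ⊗ Y) ⊗ B₂)) ⊗≫ B₁ ◁ f ▷ B₂ ⊗≫ 𝟙 _ := by
          rw [braiding_whiskerRight_comp_whiskerLeft_braiding]
    _ = 𝟙 _ ⊗≫ X ◁ (β_ (B₁ ⊗ B₂) Y).hom ⊗≫ ((β_ (X ⊗ Y) B₁).hom ≫ B₁ ◁ f) ▷ B₂ ⊗≫ 𝟙 _ := by
          monoidal
    _ = _ := by
      rw [← BraidedCategory.braiding_naturality_left]; simp only [braidMid]; monoidal

end CategoryTheory.SymmetricCategory

open SymmetricCategory in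
theorem Psic2_general {C : Type*} [Category C] [MonoidalCategory C] [SymmetricCategory C]
    (E : C ⥤ C)
    (ψ : ∀ A B : C, E.obj A ⊗ E.obj B ⟶ E.obj (A ⊗ B))
    (Ψ : ∀ A₁ A₂ B : C, (E.obj A₁ ⊗ B) ⊗ E.obj A₂ ⟶ E.obj (A₁ ⊗ A₂) ⊗ B)
    (hΨ : ∀ A₁ A₂ B : C,
      Ψ A₁ A₂ B = (α_ (E.obj A₁) B (E.obj A₂)).hom ≫
        (𝟙 (E.obj A₁) ⊗ₘ (β_ B (E.obj A₂)).hom) ≫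
        (α_ (E.obj A₁) (E.obj A₂) B).inv ≫ (ψ A₁ A₂ ⊗ₘ 𝟙 B)) :
    ∀ A₁ A₂ B₁ B₂ : C,
      (𝟙 (E.obj A₁ ⊗ (B₁ ⊗ (B₂ ⊗ E.obj A₂))) ⊗≫
        ((β_ (E.obj A₁) B₁).hom ⊗ₘ 𝟙 (B₂ ⊗ E.obj A₂)) ⊗≫
        (𝟙 B₁ ⊗ₘ Ψ A₁ A₂ B₂) ⊗≫
        𝟙 (B₁ ⊗ (E.obj (A₁ ⊗ A₂) ⊗ B₂)))
      = (𝟙 (E.obj A₁ ⊗ (B₁ ⊗ (B₂ ⊗ E.obj A₂))) ⊗≫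
        Ψ A₁ A₂ (B₁ ⊗ B₂) ⊗≫
        ((β_ (E.obj (A₁ ⊗ A₂)) B₁).hom ⊗ₘ 𝟙 B₂) ⊗≫
        𝟙 (B₁ ⊗ (E.obj (A₁ ⊗ A₂) ⊗ B₂))) := by
  intro A₁ A₂ B₁ B₂
  have hΨ_braidMid : ∀ B, Ψ A₁ A₂ B = braidMid (ψ A₁ A₂) B := fun B => by
    simp only [hΨ, braidMid, id_tensorHom, tensorHom_id]
  simp only [hΨ_braidMid, id_tensorHom, tensorHom_id]
  exact braiding_whiskerRight_comp_whiskerLeft_braidMid (ψ A₁ A₂) B₁ B₂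

set_option maxHeartbeats 1000000 in
/-- For a linear (symmetric lax monoidal) endofunctor `E` of a symmetric monoidal
category, with `Ψ_{A₁,A₂;B} := (ψ_{A₁,A₂} ⊗ 1_B) ∘ a⁻¹ ∘ (1_{EA₁} ⊗ c_{B,EA₂}) ∘ a`,
the equation (Ψc2) holds (structural coherence isomorphisms inserted via `⊗≫`). -/
theorem Psic2 {C : Type*} [Category C] [MonoidalCategory C] [SymmetricCategory C]
    (E : C ⥤ C)
    (ψ : ∀ A B : C, E.obj A ⊗ E.obj B ⟶ E.obj (A ⊗ B))
    (ψ₀ : 𝟙_ C ⟶ E.obj (𝟙_ C))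
    (ψ_nat : ∀ {A A' B B' : C} (f : A ⟶ A') (g : B ⟶ B'),
      (E.map f ⊗ₘ E.map g) ≫ ψ A' B' = ψ A B ≫ E.map (f ⊗ₘ g))
    (ψa : ∀ A B C' : C,
      (ψ A B ⊗ₘ 𝟙 (E.obj C')) ≫ ψ (A ⊗ B) C' ≫ E.map (α_ A B C').hom
        = (α_ (E.obj A) (E.obj B) (E.obj C')).hom ≫ (𝟙 (E.obj A) ⊗ₘ ψ B C') ≫ ψ A (B ⊗ C'))
    (ψl : ∀ A : C,
      (ψ₀ ⊗ₘ 𝟙 (E.obj A)) ≫ ψ (𝟙_ C) A ≫ E.map (λ_ A).hom = (λ_ (E.obj A)).hom)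
    (ψr : ∀ A : C,
      (𝟙 (E.obj A) ⊗ₘ ψ₀) ≫ ψ A (𝟙_ C) ≫ E.map (ρ_ A).hom = (ρ_ (E.obj A)).hom)
    (ψc : ∀ A B : C,
      ψ A B ≫ E.map (β_ A B).hom = (β_ (E.obj A) (E.obj B)).hom ≫ ψ B A)
    (Ψ : ∀ A₁ A₂ B : C, (E.obj A₁ ⊗ B) ⊗ E.obj A₂ ⟶ E.obj (A₁ ⊗ A₂) ⊗ B)
    (hΨ : ∀ A₁ A₂ B : C,
      Ψ A₁ A₂ B = (α_ (E.obj A₁) B (E.obj A₂)).hom ≫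
        (𝟙 (E.obj A₁) ⊗ₘ (β_ B (E.obj A₂)).hom) ≫
        (α_ (E.obj A₁) (E.obj A₂) B).inv ≫ (ψ A₁ A₂ ⊗ₘ 𝟙 B)) :
    ∀ A₁ A₂ B₁ B₂ : C,
      (𝟙 (E.obj A₁ ⊗ (B₁ ⊗ (B₂ ⊗ E.obj A₂))) ⊗≫
        ((β_ (E.obj A₁) B₁).hom ⊗ₘ 𝟙 (B₂ ⊗ E.obj A₂)) ⊗≫
        (𝟙 B₁ ⊗ₘ Ψ A₁ A₂ B₂) ⊗≫
        𝟙 (B₁ ⊗ (E.obj (A₁ ⊗ A₂) ⊗ B₂)))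
      = (𝟙 (E.obj A₁ ⊗ (B₁ ⊗ (B₂ ⊗ E.obj A₂))) ⊗≫
        Ψ A₁ A₂ (B₁ ⊗ B₂) ⊗≫
        ((β_ (E.obj (A₁ ⊗ A₂)) B₁).hom ⊗ₘ 𝟙 B₂) ⊗≫
        𝟙 (B₁ ⊗ (E.obj (A₁ ⊗ A₂) ⊗ B₂))) :=
  Psic2_general E ψ Ψ hΨ
end

section
/- The equation (Ψc4) holds: for all objects A₁, A₂, B₁, B₂ of C, the composite Ψ_{A₁,A₂;B₁⊗B₂} ∘ (1_{EA₁⊗B₁} ⊗ c_{EA₂,B₂}) equals Ψ_{A₁,A₂;B₁} ⊗ 1_{B₂}, where on each side the unique structural coherence isomorphisms of C (built from a, l, r and their inverses) are inserted between the displayed factors so that the composites are well-typed morphisms with common source a bracketing of EA₁ ⊗ B₁ ⊗ EA₂ ⊗ B₂ and common target (E(A₁⊗A₂) ⊗ B₁) ⊗ B₂ (in Lean this can be expressed with monoidal coherent composition ⊗≫). -/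
/-!
Unfolding Ψ, both sides are ψ_{A₁,A₂} preceded by structural maps and braidings. On the left
the braiding c_{B₁⊗B₂,EA₂} splits by the hexagon axiom into 1 ⊗ c_{B₂,EA₂} followed by
c_{B₁,EA₂} ⊗ 1; the first factor cancels the c_{EA₂,B₂} in front by symmetry, leaving exactly
the braiding c_{B₁,EA₂} ⊗ 1 of the right-hand side. The rest is coherence.
-/

open CategoryTheory MonoidalCategory

theorem whiskerLeft_braiding_comp_braiding_tensor_left {C : Type*} [Category C]
    [MonoidalCategory C] [SymmetricCategory C] (X Y Z : C) :
    X ◁ (β_ Y Z).hom ≫ (α_ X Z Y).inv ≫ (β_ (X ⊗ Z) Y).hom =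
      (α_ X Y Z).inv ≫ (β_ X Y).hom ▷ Z ≫ (α_ Y X Z).hom := by
  simp [BraidedCategory.braiding_tensor_left_hom, ← whiskerLeft_comp_assoc]

theorem Psic4_general {C : Type*} [Category C] [MonoidalCategory C] [SymmetricCategory C]
    (E : C ⥤ C)
    (ψ : ∀ A B : C, E.obj A ⊗ E.obj B ⟶ E.obj (A ⊗ B))
    (Ψ : ∀ A₁ A₂ B : C, (E.obj A₁ ⊗ B) ⊗ E.obj A₂ ⟶ E.obj (A₁ ⊗ A₂) ⊗ B)
    (hΨ : ∀ A₁ A₂ B : C,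
      Ψ A₁ A₂ B = (α_ (E.obj A₁) B (E.obj A₂)).hom ≫
        (𝟙 (E.obj A₁) ⊗ₘ (β_ B (E.obj A₂)).hom) ≫
        (α_ (E.obj A₁) (E.obj A₂) B).inv ≫ (ψ A₁ A₂ ⊗ₘ 𝟙 B)) :
    ∀ A₁ A₂ B₁ B₂ : C,
      (𝟙 (E.obj A₁ ⊗ (B₁ ⊗ (E.obj A₂ ⊗ B₂))) ⊗≫
        (𝟙 (E.obj A₁ ⊗ B₁) ⊗ₘ (β_ (E.obj A₂) B₂).hom) ⊗≫
        Ψ A₁ A₂ (B₁ ⊗ B₂) ⊗≫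
        𝟙 ((E.obj (A₁ ⊗ A₂) ⊗ B₁) ⊗ B₂))
      = (𝟙 (E.obj A₁ ⊗ (B₁ ⊗ (E.obj A₂ ⊗ B₂))) ⊗≫
        (Ψ A₁ A₂ B₁ ⊗ₘ 𝟙 B₂) ⊗≫
        𝟙 ((E.obj (A₁ ⊗ A₂) ⊗ B₁) ⊗ B₂)) := by
  intro A₁ A₂ B₁ B₂
  -- keep c_{B₁⊗B₂,EA₂} unexpanded so that the braiding lemma above can match it
  simp [hΨ, monoidalComp, -BraidedCategory.braiding_tensor_left_hom]
  rw [← whiskerLeft_comp_assoc, ← whiskerLeft_comp_assoc, Category.assoc,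
    whiskerLeft_braiding_comp_braiding_tensor_left]
  simp

set_option maxHeartbeats 1000000 in
/-- For a linear (symmetric lax monoidal) endofunctor `E` of a symmetric monoidal
category, with `Ψ_{A₁,A₂;B} := (ψ_{A₁,A₂} ⊗ 1_B) ∘ a⁻¹ ∘ (1_{EA₁} ⊗ c_{B,EA₂}) ∘ a`,
the equation (Ψc4) holds (structural coherence isomorphisms inserted via `⊗≫`). -/
theorem Psic4 {C : Type*} [Category C] [MonoidalCategory C] [SymmetricCategory C]
    (E : C ⥤ C)
    (ψ : ∀ A B : C, E.obj A ⊗ E.obj B ⟶ E.obj (A ⊗ B))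
    (ψ₀ : 𝟙_ C ⟶ E.obj (𝟙_ C))
    (ψ_nat : ∀ {A A' B B' : C} (f : A ⟶ A') (g : B ⟶ B'),
      (E.map f ⊗ₘ E.map g) ≫ ψ A' B' = ψ A B ≫ E.map (f ⊗ₘ g))
    (ψa : ∀ A B C' : C,
      (ψ A B ⊗ₘ 𝟙 (E.obj C')) ≫ ψ (A ⊗ B) C' ≫ E.map (α_ A B C').hom
        = (α_ (E.obj A) (E.obj B) (E.obj C')).hom ≫ (𝟙 (E.obj A) ⊗ₘ ψ B C') ≫ ψ A (B ⊗ C'))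
    (ψl : ∀ A : C,
      (ψ₀ ⊗ₘ 𝟙 (E.obj A)) ≫ ψ (𝟙_ C) A ≫ E.map (λ_ A).hom = (λ_ (E.obj A)).hom)
    (ψr : ∀ A : C,
      (𝟙 (E.obj A) ⊗ₘ ψ₀) ≫ ψ A (𝟙_ C) ≫ E.map (ρ_ A).hom = (ρ_ (E.obj A)).hom)
    (ψc : ∀ A B : C,
      ψ A B ≫ E.map (β_ A B).hom = (β_ (E.obj A) (E.obj B)).hom ≫ ψ B A)
    (Ψ : ∀ A₁ A₂ B : C, (E.obj A₁ ⊗ B) ⊗ E.obj A₂ ⟶ E.obj (A₁ ⊗ A₂) ⊗ B)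
    (hΨ : ∀ A₁ A₂ B : C,
      Ψ A₁ A₂ B = (α_ (E.obj A₁) B (E.obj A₂)).hom ≫
        (𝟙 (E.obj A₁) ⊗ₘ (β_ B (E.obj A₂)).hom) ≫
        (α_ (E.obj A₁) (E.obj A₂) B).inv ≫ (ψ A₁ A₂ ⊗ₘ 𝟙 B)) :
    ∀ A₁ A₂ B₁ B₂ : C,
      (𝟙 (E.obj A₁ ⊗ (B₁ ⊗ (E.obj A₂ ⊗ B₂))) ⊗≫
        (𝟙 (E.obj A₁ ⊗ B₁) ⊗ₘ (β_ (E.obj A₂) B₂).hom) ⊗≫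
        Ψ A₁ A₂ (B₁ ⊗ B₂) ⊗≫
        𝟙 ((E.obj (A₁ ⊗ A₂) ⊗ B₁) ⊗ B₂))
      = (𝟙 (E.obj A₁ ⊗ (B₁ ⊗ (E.obj A₂ ⊗ B₂))) ⊗≫
        (Ψ A₁ A₂ B₁ ⊗ₘ 𝟙 B₂) ⊗≫
        𝟙 ((E.obj (A₁ ⊗ A₂) ⊗ B₁) ⊗ B₂)) :=
  Psic4_general E ψ Ψ hΨ
end
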